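/- arXiv:1109.4434 — 3 statements merged into one kernel-verified Lean document; each statement's English description precedes it below -/
import Mathlib

section
/- For any Grassmann necklace I = (I_1, ..., I_n), the sets I_i and I_j are pairwise weakly separated: for any i, j one has I_j ∖ I_i ⊆ [j, i) and I_i ∖ I_j ⊆ [i, j) (cyclic intervals). -/
def cpos {n : ℕ} (i a : Fin n) : ℕ := ((a - i : Fin n) : ℕ)

def CyclicallyOrdered {n : ℕ} (a b c d : Fin n) : Prop :=
  0 < cpos a b ∧ cpos a b < cpos a c ∧ cpos a c < cpos a d

instance {n : ℕ} (a b c d : Fin n) : Decidable (CyclicallyOrdered a b c d) := by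
  unfold CyclicallyOrdered; infer_instance

def WeaklySeparated {n : ℕ} (I J : Finset (Fin n)) : Prop :=
  ¬ ∃ a b a' b' : Fin n, CyclicallyOrdered a b a' b' ∧
    a ∈ I \ J ∧ a' ∈ I \ J ∧ b ∈ J \ I ∧ b' ∈ J \ I

def cycIco {n : ℕ} (i j : Fin n) : Finset (Fin n) :=
  Finset.univ.filter (fun x => cpos i x < cpos i j)

def cycIcc {n : ℕ} (i j : Fin n) : Finset (Fin n) :=
  Finset.univ.filter (fun x => cpos i x ≤ cpos i j)

def cycOpen {n : ℕ} (i j : Fin n) : Finset (Fin n) :=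
  Finset.univ.filter (fun x => 0 < cpos i x ∧ cpos i x < cpos i j)

def IsGrassmannNecklace {n : ℕ} [NeZero n] (k : ℕ) (I : Fin n → Finset (Fin n)) : Prop :=
  (∀ i, (I i).card = k) ∧ (∀ i, I i \ {i} ⊆ I (i + 1)) ∧ (∀ i, i ∉ I i → I (i + 1) = I i)

def leShift {n : ℕ} (i : Fin n) (A B : Finset (Fin n)) : Prop :=
  List.Forall₂ (· ≤ ·) ((A.image (fun x => x - i)).sort (· ≤ ·))
    ((B.image (fun x => x - i)).sort (· ≤ ·))

def MemPositroid {n : ℕ} (I : Fin n → Finset (Fin n)) (J : Finset (Fin n)) : Prop :=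
  ∀ i, leShift i (I i) J

def IsWSCollection {n : ℕ} (C : Finset (Finset (Fin n))) : Prop :=
  ∀ X ∈ C, ∀ Y ∈ C, WeaklySeparated X Y

def IsMaxWSCollection {n : ℕ} (k : ℕ) (C : Finset (Finset (Fin n))) : Prop :=
  (∀ X ∈ C, X.card = k) ∧ IsWSCollection C ∧
  ∀ C' : Finset (Finset (Fin n)), C ⊆ C' → (∀ X ∈ C', X.card = k) → IsWSCollection C' → C' = C

/-! Going around the necklace, an element `x ∈ I i` can only leave at step `x`, since
`I (t + 1) ⊇ I t ∖ {t}`. Hence `I i ∖ I j ⊆ [i, j)` and `I j ∖ I i ⊆ [j, i)`: the two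
differences lie in complementary cyclic intervals, so they cannot interleave. -/

open scoped Fin.CommRing Fin.NatCast

section CyclicPosition

variable {n : ℕ}

lemma cpos_lt (i a : Fin n) : cpos i a < n := (a - i).isLt

lemma cpos_self [NeZero n] (i : Fin n) : cpos i i = 0 := by
  simp [cpos]

lemma cpos_add_natCast [NeZero n] (i : Fin n) {m : ℕ} (hm : m < n) :
    cpos i (i + (m : Fin n)) = m := by
  rw [cpos, add_sub_cancel_left, Fin.val_cast_of_lt hm]

lemma add_natCast_cpos [NeZero n] (i j : Fin n) : i + ((cpos i j : ℕ) : Fin n) = j := by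
  rw [cpos, Fin.cast_val_eq_self, add_sub_cancel]

lemma cpos_trans [NeZero n] (i a x : Fin n) :
    cpos i x = cpos i a + cpos a x ∨ cpos i x + n = cpos i a + cpos a x := by
  have hsum : cpos i x = (cpos i a + cpos a x) % n := by
    rw [cpos, ← sub_add_sub_cancel x a i, Fin.val_add, Nat.add_comm]
    rfl
  have := cpos_lt i a
  have := cpos_lt a x
  rcases Nat.lt_or_ge (cpos i a + cpos a x) n with h | h
  · exact .inl (hsum.trans (Nat.mod_eq_of_lt h))
  · right
    rw [hsum, Nat.mod_eq_sub_mod h, Nat.mod_eq_of_lt (by omega)]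
    omega

lemma mem_cycIco {i j x : Fin n} : x ∈ cycIco i j ↔ cpos i x < cpos i j := by
  simp [cycIco]

lemma le_cpos_of_mem_cycIco [NeZero n] {i j x : Fin n} (hx : x ∈ cycIco j i) :
    cpos i j ≤ cpos i x := by
  rw [mem_cycIco] at hx
  have := cpos_trans i j x
  have := cpos_trans j i j
  have := cpos_self j
  have := cpos_lt i x
  have := cpos_lt i j
  omega

end CyclicPosition

lemma weaklySeparated_of_sdiff_subset_cycIco {n : ℕ} [NeZero n] {I J : Finset (Fin n)}
    {i j : Fin n} (hIJ : I \ J ⊆ cycIco i j) (hJI : J \ I ⊆ cycIco j i) :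
    WeaklySeparated I J := by
  rintro ⟨a, b, a', b', ⟨hab, haa', ha'b'⟩, ha, ha', hb, hb'⟩
  have := mem_cycIco.1 (hIJ ha)
  have := mem_cycIco.1 (hIJ ha')
  have := le_cpos_of_mem_cycIco (hJI hb)
  have := le_cpos_of_mem_cycIco (hJI hb')
  have := cpos_trans i a b
  have := cpos_trans i a a'
  have := cpos_trans i a b'
  have := cpos_lt a b'
  have := cpos_lt i b
  have := cpos_lt i a'
  have := cpos_lt i b'
  omega

section Necklace

variable {n : ℕ} [NeZero n] {I : Fin n → Finset (Fin n)}

lemma mem_add_natCast_of_le_cpos (hstep : ∀ t, I t \ {t} ⊆ I (t + 1)) {i x : Fin n}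
    (hx : x ∈ I i) {m : ℕ} (hm : m ≤ cpos i x) : x ∈ I (i + (m : Fin n)) := by
  induction m with
  | zero => simpa using hx
  | succ m ih =>
    have hne : x ≠ i + (m : Fin n) := by
      rintro rfl
      rw [cpos_add_natCast i (by have := cpos_lt i (i + (m : Fin n)); omega)] at hm
      omega
    have hnext := hstep _ (Finset.mem_sdiff.2 ⟨ih (by omega), by simpa using hne⟩)
    rwa [Nat.cast_succ, ← add_assoc]

lemma sdiff_subset_cycIco (hstep : ∀ t, I t \ {t} ⊆ I (t + 1)) (i j : Fin n) :
    I i \ I j ⊆ cycIco i j := by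
  intro x hx
  rw [Finset.mem_sdiff] at hx
  rw [mem_cycIco]
  by_contra! hle
  exact hx.2 (add_natCast_cpos i j ▸ mem_add_natCast_of_le_cpos hstep hx.1 hle)

end Necklace

/-- The members of a Grassmann necklace are pairwise weakly separated, with
I_j ∖ I_i ⊆ [j,i) and I_i ∖ I_j ⊆ [i,j). -/
theorem stmt_2 {n k : ℕ} [NeZero n] (I : Fin n → Finset (Fin n))
    (hI : IsGrassmannNecklace k I) :
    ∀ i j : Fin n, WeaklySeparated (I i) (I j) ∧
      I j \ I i ⊆ cycIco j i ∧ I i \ I j ⊆ cycIco i j := by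
  intro i j
  have hIJ := sdiff_subset_cycIco hI.2.1 i j
  have hJI := sdiff_subset_cycIco hI.2.1 j i
  exact ⟨weaklySeparated_of_sdiff_subset_cycIco hIJ hJI, hJI, hIJ⟩
end

section
/- Let I = (I_1,...,I_n) be a Grassmann necklace with I_i = I_j for some i ≠ j, and let M be the associated positroid. Set k¹ = |I_i ∩ [i,j)| and k² = |I_i ∩ [j,i)|. Then for every J ∈ M, one has |J ∩ [i,j)| = k¹ and |J ∩ [j,i)| = k². -/
/-!
Write `≤ᵢ` for the Gale order in the cyclic order starting at `i`. If `I_i ≤ᵢ J`, then every initial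
segment of that cyclic order contains at least as many elements of `I_i` as of `J`; for the segment
`[i,j)` this gives `|J ∩ [i,j)| ≤ |I_i ∩ [i,j)|`, and `I_j ≤ⱼ J` with `I_j = I_i` gives
`|J ∩ [j,i)| ≤ |I_i ∩ [j,i)|`. Since `[i,j)` and `[j,i)` partition `[n]` and `|J| = |I_i|`, both
inequalities are equalities.
-/

theorem List.Forall₂.countP_le_countP {α β : Type*} {R : α → β → Prop} {p : α → Bool}
    {q : β → Bool} (hpq : ∀ a b, R a b → q b → p a) :
    ∀ {l₁ : List α} {l₂ : List β}, Forall₂ R l₁ l₂ → l₂.countP q ≤ l₁.countP p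
  | _, _, .nil => le_rfl
  | _, _, .cons (a := a) (b := b) hab h => by
    have ih := h.countP_le_countP hpq
    simp only [countP_cons]
    by_cases hb : q b
    · simp [hb, hpq a b hab hb, ih]
    · simpa [hb] using ih.trans (Nat.le_add_right _ _)

theorem Finset.countP_sort {α : Type*} (s : Finset α) (r : α → α → Prop) [DecidableRel r]
    [IsTrans α r] [Std.Antisymm r] [Std.Total r] (p : α → Prop) [DecidablePred p] :
    (s.sort r).countP (fun a => decide (p a)) = (s.filter p).card := by
  rw [← Multiset.coe_countP, sort_eq, Multiset.countP_eq_card_filter]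
  rfl

section Cyclic

variable {n : ℕ}

theorem cpos_eq_ite (i x : Fin n) : cpos i x = if i ≤ x then (x : ℕ) - i else n + x - i := by
  unfold cpos
  split_ifs with h
  · exact Fin.sub_val_of_le h
  · exact Fin.coe_sub_iff_lt.2 (not_le.1 h)

theorem inter_cycIco_eq_filter (S : Finset (Fin n)) (i j : Fin n) :
    S ∩ cycIco i j = S.filter (fun x => cpos i x < cpos i j) := by
  simp [cycIco, Finset.inter_filter]

theorem mem_cycIco_swap_iff {i j : Fin n} (hij : i ≠ j) (x : Fin n) :
    x ∈ cycIco j i ↔ x ∉ cycIco i j := by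
  have hx := x.isLt
  have hij' := Fin.val_ne_iff.2 hij
  simp only [cycIco, Finset.mem_filter, Finset.mem_univ, true_and, cpos_eq_ite, Fin.le_def]
  split_ifs <;> omega

theorem card_inter_cycIco_add_card_inter_cycIco {i j : Fin n} (hij : i ≠ j)
    (S : Finset (Fin n)) : (S ∩ cycIco i j).card + (S ∩ cycIco j i).card = S.card := by
  have hswap : S ∩ cycIco j i = S \ cycIco i j := by
    ext x
    simp [mem_cycIco_swap_iff hij]
  rw [hswap, Finset.card_inter_add_card_sdiff]

end Cyclic

namespace leShift

variable {n : ℕ} [NeZero n] {i : Fin n} {A B : Finset (Fin n)}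

theorem card_eq (h : leShift i A B) : A.card = B.card := by
  have hlen := h.length_eq
  simp only [Finset.length_sort] at hlen
  rwa [Finset.card_image_of_injective _ (sub_left_injective (b := i)),
    Finset.card_image_of_injective _ (sub_left_injective (b := i))] at hlen

theorem card_filter_cpos_lt_le (h : leShift i A B) (c : ℕ) :
    (B.filter (fun x => cpos i x < c)).card ≤ (A.filter (fun x => cpos i x < c)).card := by
  have hshift : ∀ S : Finset (Fin n), (S.filter (fun x => cpos i x < c)).card
      = ((S.image (· - i)).sort (· ≤ ·)).countP (fun y : Fin n => decide ((y : ℕ) < c)) := by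
    intro S
    rw [Finset.countP_sort, Finset.filter_image,
      Finset.card_image_of_injective _ (sub_left_injective (b := i))]
    rfl
  rw [hshift, hshift]
  exact h.countP_le_countP fun a b hab hb => by
    simp only [decide_eq_true_eq] at hb ⊢
    exact lt_of_le_of_lt hab hb

theorem card_inter_cycIco_le (h : leShift i A B) (j : Fin n) :
    (B ∩ cycIco i j).card ≤ (A ∩ cycIco i j).card := by
  rw [inter_cycIco_eq_filter, inter_cycIco_eq_filter]
  exact h.card_filter_cpos_lt_le _

end leShift

theorem stmt_7_general {n : ℕ} (I : Fin n → Finset (Fin n))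
    (i j : Fin n) (hij : i ≠ j) (heq : I i = I j)
    (J : Finset (Fin n)) (hJ : MemPositroid I J) :
    (J ∩ cycIco i j).card = (I i ∩ cycIco i j).card ∧
    (J ∩ cycIco j i).card = (I i ∩ cycIco j i).card := by
  have := NeZero.of_pos i.pos
  have hi : leShift i (I i) J := hJ i
  have hj : leShift j (I i) J := heq ▸ hJ j
  have hleij := hi.card_inter_cycIco_le j
  have hleji := hj.card_inter_cycIco_le i
  have hsumJ := card_inter_cycIco_add_card_inter_cycIco hij J
  have hsumI := card_inter_cycIco_add_card_inter_cycIco hij (I i)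
  have hcard := hi.card_eq
  omega

/-- If I_i = I_j in a Grassmann necklace, then every member of the positroid
meets the cyclic intervals [i,j) and [j,i) in the same cardinalities as I_i. -/
theorem stmt_7 {n k : ℕ} [NeZero n] (I : Fin n → Finset (Fin n))
    (hI : IsGrassmannNecklace k I) (i j : Fin n) (hij : i ≠ j) (heq : I i = I j)
    (J : Finset (Fin n)) (hJk : J.card = k) (hJ : MemPositroid I J) :
    (J ∩ cycIco i j).card = (I i ∩ cycIco i j).card ∧
    (J ∩ cycIco j i).card = (I i ∩ cycIco j i).card :=
  stmt_7_general I i j hij heq J hJ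
end

section
/- Let I = (I_1, ..., I_n) be a Grassmann necklace with associated decorated permutation π, and suppose J ∈ binom([n],k) is weakly separated from all I_r but J ∉ M_I. Then there exists s ∈ [n] such that for every r ∈ [n], with respect to the order ≤_s, either the minimal element of J∖I_r is less than the minimal element of I_r∖J for all r, or the maximal element of I_r∖J is greater than the maximal element of J∖I_r for all r. In particular, J ≱_s I_s for this s. -/
open Finset

theorem List.forall₂_le_of_countP_le {α : Type*} [LinearOrder α] :
    ∀ {l₁ l₂ : List α}, l₁.Pairwise (· < ·) → l₂.Pairwise (· < ·) → l₁.length = l₂.length →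
      (∀ t, l₂.countP (· ≤ t) ≤ l₁.countP (· ≤ t)) → List.Forall₂ (· ≤ ·) l₁ l₂
  | [], [], _, _, _, _ => .nil
  | x :: l₁, y :: l₂, h₁, h₂, hlen, hcount => by
    rw [List.pairwise_cons] at h₁ h₂
    have hxy : x ≤ y := by
      by_contra! hyx
      have hzero : (x :: l₁).countP (· ≤ y) = 0 := List.countP_eq_zero.2 fun z hz => by
        rcases List.mem_cons.1 hz with rfl | hz
        · simpa using hyx
        · simpa using hyx.trans (h₁.1 z hz)
      simpa [hzero] using hcount y
    refine .cons hxy (List.forall₂_le_of_countP_le h₁.2 h₂.2 (by simpa using hlen) fun t => ?_)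
    by_cases hyt : y ≤ t
    · have := hcount t
      simp only [List.countP_cons, hyt, hxy.trans hyt, decide_true, if_true] at this
      omega
    · rw [List.countP_eq_zero.2 fun z hz => by simpa using (not_le.1 hyt).trans (h₂.1 z hz)]
      exact Nat.zero_le _

section Counting

variable {α : Type*} {p : α → Prop} [DecidablePred p]

theorem Finset.card_filter_eq_add_of_imp (X : Finset α) {q : α → Prop} [DecidablePred q]
    (hpq : ∀ x, p x → q x) : #(X.filter q) = #(X.filter p) + #(X.filter fun x => q x ∧ ¬ p x) := by
  rw [← card_filter_add_card_filter_not (s := X.filter q) p, filter_filter, filter_filter]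
  congr 2
  exact filter_congr fun x _ => ⟨And.right, fun hx => ⟨hpq x hx, hx⟩⟩

variable [DecidableEq α] {P Q R : Finset α}

theorem Finset.filter_subset_filter_of_forall_sdiff (h : ∀ u ∈ Q \ R, ¬ p u) :
    Q.filter p ⊆ R.filter p := fun u hu => by
  rw [mem_filter] at hu ⊢
  by_contra huR
  exact h u (mem_sdiff.2 ⟨hu.1, fun hR => huR ⟨hR, hu.2⟩⟩) hu.2

theorem Finset.card_filter_lt_of_forall_sdiff {v : α} (hv : v ∈ R \ Q) (hpv : p v)
    (h : ∀ u ∈ Q \ R, ¬ p u) : #(Q.filter p) < #(R.filter p) :=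
  card_lt_card ⟨filter_subset_filter_of_forall_sdiff h, fun hsub =>
    (mem_sdiff.1 hv).2 (mem_filter.1 (hsub (mem_filter.2 ⟨(mem_sdiff.1 hv).1, hpv⟩))).1⟩

theorem Finset.exists_mem_sdiff_of_card_filter_lt (h : #(P.filter p) < #(Q.filter p)) :
    ∃ x ∈ Q \ P, p x := by
  obtain ⟨x, hxQ, hxP⟩ := exists_mem_notMem_of_card_lt_card h
  rw [mem_filter] at hxQ
  exact ⟨x, mem_sdiff.2 ⟨hxQ.1, fun hx => hxP (mem_filter.2 ⟨hx, hxQ.2⟩)⟩, hxQ.2⟩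

end Counting

section LinearOrder

variable {α : Type*} [LinearOrder α]

theorem Finset.countP_sort_s18 (X : Finset α) (p : α → Prop) [DecidablePred p] :
    (X.sort (· ≤ ·)).countP (p ·) = #(X.filter p) := by
  rw [← Multiset.coe_countP, Finset.sort_eq, Multiset.countP_eq_card_filter]
  rfl

theorem Finset.forall₂_sort_le_of_card_filter_le {A B : Finset α} (hcard : #A = #B)
    (h : ∀ t, #(B.filter (· ≤ t)) ≤ #(A.filter (· ≤ t))) :
    List.Forall₂ (· ≤ ·) (A.sort (· ≤ ·)) (B.sort (· ≤ ·)) :=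
  List.forall₂_le_of_countP_le (sortedLT_sort A).pairwise (sortedLT_sort B).pairwise
    (by simpa using hcard) fun t => by simpa only [countP_sort_s18] using h t

theorem Finset.card_filter_le_add_card_filter_lt (X : Finset α) (t : α) :
    #(X.filter (· ≤ t)) + #(X.filter (t < ·)) = #X := by
  simpa only [not_le] using card_filter_add_card_filter_not (s := X) (· ≤ t)

theorem Finset.card_filter_lt_add_card_filter_le (X : Finset α) (t : α) :
    #(X.filter (· < t)) + #(X.filter (t ≤ ·)) = #X := by
  simpa only [not_lt] using card_filter_add_card_filter_not (s := X) (· < t)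

def Finset.Interlaced (P Q : Finset α) : Prop :=
  ∃ b₁ ∈ P \ Q, ∃ a₁ ∈ Q \ P, ∃ b₂ ∈ P \ Q, ∃ a₂ ∈ Q \ P, b₁ < a₁ ∧ a₁ < b₂ ∧ b₂ < a₂

theorem Finset.interlaced_of_card_filter {P Q : Finset α} (hcard : #P = #Q) {v y w : α}
    (hvy : v ≤ y) (hyw : y < w) (hv : #(Q.filter (· ≤ v)) < #(P.filter (· ≤ v)))
    (hy : #(P.filter (· ≤ y)) < #(Q.filter (· ≤ y)))
    (hw : #(Q.filter (· < w)) < #(P.filter (· < w))) : P.Interlaced Q := by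
  have split_vy (X : Finset α) := X.card_filter_eq_add_of_imp (p := (· ≤ v)) (q := (· ≤ y))
    fun _ h => h.trans hvy
  have split_yw (X : Finset α) := X.card_filter_eq_add_of_imp (p := (· ≤ y)) (q := (· < w))
    fun _ h => h.trans_lt hyw
  have hP := P.card_filter_lt_add_card_filter_le w
  have hQ := Q.card_filter_lt_add_card_filter_le w
  obtain ⟨b₁, hb₁, hb₁v⟩ := exists_mem_sdiff_of_card_filter_lt hv
  obtain ⟨a₁, ha₁, ha₁y, ha₁v⟩ := exists_mem_sdiff_of_card_filter_lt (P := P) (Q := Q)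
    (p := fun x => x ≤ y ∧ ¬ x ≤ v) (by have := split_vy P; have := split_vy Q; omega)
  obtain ⟨b₂, hb₂, hb₂w, hb₂y⟩ := exists_mem_sdiff_of_card_filter_lt (P := Q) (Q := P)
    (p := fun x => x < w ∧ ¬ x ≤ y) (by have := split_yw P; have := split_yw Q; omega)
  obtain ⟨a₂, ha₂, hwa₂⟩ := exists_mem_sdiff_of_card_filter_lt (P := P) (Q := Q) (p := (w ≤ ·))
    (by omega)
  exact ⟨b₁, hb₁, a₁, ha₁, b₂, hb₂, a₂, ha₂, hb₁v.trans_lt (not_le.1 ha₁v),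
    ha₁y.trans_lt (not_le.1 hb₂y), hb₂w.trans_le hwa₂⟩

theorem Finset.exists_sdiff_lt_sdiff {P Q : Finset α} (hne : (P \ Q).Nonempty)
    (h : ∀ u ∈ Q \ P, ∃ v ∈ P \ Q, v ≤ u) : ∃ v ∈ P \ Q, ∀ u ∈ Q \ P, v < u := by
  refine ⟨(P \ Q).min' hne, min'_mem _ _, fun u hu => ?_⟩
  obtain ⟨v, hv, hvu⟩ := h u hu
  exact ((min'_le _ _ hv).trans hvu).lt_of_ne
    fun h => (mem_sdiff.1 hu).2 (h ▸ (mem_sdiff.1 (min'_mem _ hne)).1)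

theorem Finset.exists_sdiff_gt_sdiff {P Q : Finset α} (hne : (P \ Q).Nonempty)
    (h : ∀ v ∈ P \ Q, ∃ u ∈ Q \ P, v ≤ u) : ∃ u ∈ Q \ P, ∀ v ∈ P \ Q, v < u :=
  have ⟨v, hv⟩ := hne
  have ⟨u, hu, _⟩ := h v hv
  exists_sdiff_lt_sdiff (α := αᵒᵈ) ⟨u, hu⟩ h

theorem Finset.forall_exists_sdiff_lt_or_forall_exists_sdiff_gt {ι : Type*} {P Q : Finset α}
    {R : ι → Finset α} (hP : #P = #Q) (hR : ∀ i, #(R i) = #Q)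
    (hdom_le : ∀ i t, #((R i).filter (· ≤ t)) ≤ #(P.filter (· ≤ t)))
    (hdom_lt : ∀ i t, #((R i).filter (· < t)) ≤ #(P.filter (· < t)))
    (hsep : ¬ P.Interlaced Q) (hgale : ∃ y, #(P.filter (· ≤ y)) < #(Q.filter (· ≤ y))) :
    (∀ i, ∃ u ∈ Q \ R i, ∀ v ∈ R i \ Q, u < v) ∨ (∀ i, ∃ v ∈ R i \ Q, ∀ u ∈ Q \ R i, u < v) := by
  obtain ⟨y, hy⟩ := hgale
  have hne : ∀ i, (R i \ Q).Nonempty := fun i => by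
    rw [nonempty_iff_ne_empty, Ne, sdiff_eq_empty_iff_subset]
    intro hsub
    rw [← eq_of_subset_of_card_le hsub (hR i).ge] at hy
    exact (hdom_le i y).not_gt hy
  by_contra! hcon
  obtain ⟨⟨i, hi⟩, ⟨j, hj⟩⟩ := hcon
  obtain ⟨v, hv, hv_lt⟩ := exists_sdiff_lt_sdiff (hne i) hi
  obtain ⟨w, hw, hw_gt⟩ := exists_sdiff_gt_sdiff (hne j) hj
  have hv_cnt : #(Q.filter (· ≤ v)) < #(P.filter (· ≤ v)) :=
    (card_filter_lt_of_forall_sdiff (p := (· ≤ v)) hv le_rfl fun u hu =>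
      not_le.2 (hv_lt u hu)).trans_le (hdom_le i v)
  have hvy : v < y := by
    by_contra! hyv
    exact hy.not_ge <| (card_le_card <| filter_subset_filter_of_forall_sdiff fun u hu =>
      not_le.2 (hyv.trans_lt (hv_lt u hu))).trans (hdom_le i y)
  have hyw : y < w := by
    by_contra! hwy
    have hRQ := card_le_card <| filter_subset_filter_of_forall_sdiff (p := (y < ·)) fun u hu =>
      not_lt.2 ((hw_gt u hu).le.trans hwy)
    have := (R j).card_filter_le_add_card_filter_lt y
    have := Q.card_filter_le_add_card_filter_lt y
    have := hdom_le j y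
    have := hR j
    omega
  have hw_cnt : #(Q.filter (· < w)) < #(P.filter (· < w)) := by
    have hRQ := card_filter_lt_of_forall_sdiff (p := (w ≤ ·)) hw le_rfl fun u hu =>
      not_le.2 (hw_gt u hu)
    have := (R j).card_filter_lt_add_card_filter_le w
    have := Q.card_filter_lt_add_card_filter_le w
    have := hdom_lt j w
    have := hR j
    omega
  exact hsep (interlaced_of_card_filter hP hvy.le hyw hv_cnt hy hw_cnt)

end LinearOrder

section Cyclic

variable {n : ℕ} [NeZero n]

theorem Fin.card_image_sub_right (X : Finset (Fin n)) (s : Fin n) : #(X.image (· - s)) = #X :=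
  card_image_of_injective _ sub_left_injective

theorem Fin.card_filter_image_sub_right (X : Finset (Fin n)) (s : Fin n) (p : Fin n → Prop)
    [DecidablePred p] : #((X.image (· - s)).filter p) = #(X.filter fun x => p (x - s)) := by
  rw [filter_image]
  exact Fin.card_image_sub_right _ s

theorem leShift_of_card_filter_le {s : Fin n} {A B : Finset (Fin n)} (hcard : #A = #B)
    (h : ∀ t, #((B.image (· - s)).filter (· ≤ t)) ≤ #((A.image (· - s)).filter (· ≤ t))) :
    leShift s A B :=
  forall₂_sort_le_of_card_filter_le
    (by rwa [Fin.card_image_sub_right, Fin.card_image_sub_right]) h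

theorem cyclicallyOrdered_add_right_of_lt {a b c d : Fin n} (s : Fin n) (hda : d < a)
    (hab : a < b) (hbc : b < c) : CyclicallyOrdered (a + s) (b + s) (c + s) (d + s) := by
  have cpos_add_right (x y : Fin n) : cpos (x + s) (y + s) = ((y - x : Fin n) : ℕ) :=
    congrArg Fin.val (add_sub_add_right_eq_sub y x s)
  simp only [CyclicallyOrdered, cpos_add_right, Fin.coe_sub_iff_le.2 hab.le,
    Fin.coe_sub_iff_le.2 (hab.trans hbc).le, Fin.coe_sub_iff_lt.2 hda]
  have := d.isLt
  rw [Fin.lt_def] at hda hab hbc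
  omega

theorem WeaklySeparated.not_interlaced_image_sub {J X : Finset (Fin n)}
    (h : WeaklySeparated J X) (s : Fin n) : ¬ (X.image (· - s)).Interlaced (J.image (· - s)) := by
  rintro ⟨b₁, hb₁, a₁, ha₁, b₂, hb₂, a₂, ha₂, h₁, h₂, h₃⟩
  have mem {x : Fin n} {Y : Finset (Fin n)} : x ∈ Y.image (· - s) ↔ x + s ∈ Y := by
    refine ⟨fun hx => ?_, fun hx => mem_image.2 ⟨x + s, hx, add_sub_cancel_right x s⟩⟩
    obtain ⟨y, hy, rfl⟩ := mem_image.1 hx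
    simpa using hy
  simp only [mem_sdiff, mem] at hb₁ ha₁ hb₂ ha₂
  exact h ⟨a₁ + s, b₂ + s, a₂ + s, b₁ + s, cyclicallyOrdered_add_right_of_lt s h₁ h₂ h₃,
    mem_sdiff.2 ha₁, mem_sdiff.2 ha₂, mem_sdiff.2 hb₂, mem_sdiff.2 hb₁⟩

end Cyclic

namespace IsGrassmannNecklace

variable {n k : ℕ} [NeZero n] {I : Fin n → Finset (Fin n)}

theorem filter_subset_filter_succ (hI : IsGrassmannNecklace k I) {p : Fin n → Prop}
    [DecidablePred p] {i : Fin n} (hi : ¬ p i) : (I i).filter p ⊆ (I (i + 1)).filter p :=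
  fun x hx => by
    rw [mem_filter] at hx ⊢
    exact ⟨hI.2.1 i (mem_sdiff.2 ⟨hx.1, fun h => hi (mem_singleton.1 h ▸ hx.2)⟩), hx.2⟩

open Fin.NatCast in
/-- Walking from `I s` to `I r` along the necklace, the count in an initial interval `[s, s + m)`
can only drop while the walk is inside that interval and only recover once it has left it. -/
theorem card_filter_cpos_lt_le (hI : IsGrassmannNecklace k I) (s r : Fin n) (m : ℕ) :
    #((I r).filter (cpos s · < m)) ≤ #((I s).filter (cpos s · < m)) := by
  let f : ℕ → ℕ := fun j => #((I (s + j)).filter (cpos s · < m))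
  have hcpos {j : ℕ} (hj : j < n) : cpos s (s + j) = j := by
    simp [cpos, Fin.val_natCast, Nat.mod_eq_of_lt hj]
  have hsucc (j : ℕ) : s + ((j + 1 : ℕ) : Fin n) = s + j + 1 := by
    push_cast; exact (add_assoc _ _ _).symm
  have hdec {j : ℕ} (hjm : j < m) (hjn : j < n) : f (j + 1) ≤ f j := by
    have hsub := hI.filter_subset_filter_succ (p := fun x => ¬ cpos s x < m) (i := s + j)
      (by simpa [hcpos hjn])
    have hj := card_filter_add_card_filter_not (s := I (s + j)) (cpos s · < m)
    have hj' := card_filter_add_card_filter_not (s := I (s + j + 1)) (cpos s · < m)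
    simp only [f, hsucc]
    rw [hI.1] at hj hj'
    have := card_le_card hsub
    omega
  have hinc {j : ℕ} (hjm : m ≤ j) (hjn : j < n) : f j ≤ f (j + 1) := by
    simpa only [f, hsucc] using card_le_card <|
      hI.filter_subset_filter_succ (i := s + j) (by simpa [hcpos hjn])
  have hr : f (cpos s r) = #((I r).filter (cpos s · < m)) := by
    have : s + ((cpos s r : ℕ) : Fin n) = r := by simp [cpos]
    simp only [f, this]
  have hf0 : f 0 = #((I s).filter (cpos s · < m)) := by simp [f]
  have hfn : f n = f 0 := by simp [f]
  rw [← hr, ← hf0]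
  have hrn : cpos s r < n := (r - s).isLt
  rcases lt_or_ge (cpos s r) m with hrm | hrm
  · refine antitoneOn_of_succ_le (s := Set.Iic (cpos s r)) Set.ordConnected_Iic
      (fun j _ _ hj => ?_) (Nat.zero_le _) Set.self_mem_Iic (Nat.zero_le _)
    rw [Set.mem_Iic, Order.succ_eq_add_one] at hj
    rw [Order.succ_eq_add_one]
    exact hdec (by omega) (by omega)
  · rw [← hfn]
    refine monotoneOn_of_le_succ (s := Set.Icc (cpos s r) n) Set.ordConnected_Icc
      (fun j _ hj hj' => ?_) ⟨le_rfl, hrn.le⟩ ⟨hrn.le, le_rfl⟩ hrn.le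
    rw [Set.mem_Icc, Order.succ_eq_add_one] at hj'
    rw [Order.succ_eq_add_one]
    exact hinc (hrm.trans hj.1) (by omega)

end IsGrassmannNecklace

/-- If J is weakly separated from every member of a Grassmann necklace but not
in the positroid, then there is s ∈ [n] with J ≱_s I_s such that uniformly in
r, either the ≤_s-minimal element of J∖I_r precedes that of I_r∖J, or the
≤_s-maximal element of I_r∖J exceeds that of J∖I_r. -/
theorem stmt_18 {n k : ℕ} [NeZero n] (I : Fin n → Finset (Fin n))
    (hI : IsGrassmannNecklace k I) (J : Finset (Fin n)) (hJk : J.card = k)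
    (hws : ∀ r : Fin n, WeaklySeparated J (I r)) (hJ : ¬ MemPositroid I J) :
    ∃ s : Fin n, ¬ leShift s (I s) J ∧
      ((∀ r : Fin n, ∃ u ∈ J \ I r, ∀ v ∈ I r \ J, cpos s u < cpos s v) ∨
       (∀ r : Fin n, ∃ v ∈ I r \ J, ∀ u ∈ J \ I r, cpos s u < cpos s v)) := by
  obtain ⟨s, hs⟩ := not_forall.1 hJ
  have hcard (r : Fin n) : #((I r).image (· - s)) = #(J.image (· - s)) := by
    rw [Fin.card_image_sub_right, Fin.card_image_sub_right, hI.1, hJk]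
  have key := forall_exists_sdiff_lt_or_forall_exists_sdiff_gt (hcard s) hcard
    (R := fun r => (I r).image (· - s))
    (fun r t => by
      simpa only [Fin.card_filter_image_sub_right, cpos, Fin.le_def, Nat.lt_add_one_iff]
        using hI.card_filter_cpos_lt_le s r (t + 1))
    (fun r t => by
      rw [Fin.card_filter_image_sub_right, Fin.card_filter_image_sub_right]
      exact hI.card_filter_cpos_lt_le s r t)
    ((hws s).not_interlaced_image_sub s)
    (by
      by_contra! h
      exact hs (leShift_of_card_filter_le (by rw [hI.1, hJk]) h))
  refine ⟨s, hs, ?_⟩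
  simpa only [← image_sdiff _ _ sub_left_injective, exists_mem_image, forall_mem_image, cpos,
    Fin.lt_def] using key
end
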